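/- arXiv:1006.0478 — 6 statements merged into one kernel-verified Lean document; each statement's English description precedes it below -/
import Mathlib

section
/- Let R be a commutative ring, D : R → R a derivation, F ∈ R, and let A_{s,l} be the associated double sequence. Then for every integer s ≥ 2 and every l ≥ 0, one has s · A_{s,l} = Σ_{r=1}^{l+1-s} C(l,r) · A_{1,r} · A_{s-1,l-r}, where C(l,r) denotes the binomial coefficient and s · A_{s,l} denotes the s-fold sum of A_{s,l}. -/
/-!
Put `P_l(u) = ∑ₛ A_{s,l} uˢ`, so that `P_{l+1} = F · (D + u) P_l`. The identity says
`∂ᵤ P_l = ∑_{r ≥ 1} C(l,r) A_{1,r} P_{l-r}`. Both sides satisfy the same recursion in `l`: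
applying `F · (D + u)` to a binomial convolution `∑ C(l,r) aᵣ b_{l-r}` of two sequences obeying
this recursion produces, by Pascal's rule and the Leibniz rule, the convolution at level `l + 1`
plus the error terms coming from the lower rows. Induction on `l` then closes the argument, the
row `s = 1` being immediate because `A_{0,l}` vanishes for `l > 0`.
-/

open Finset

section

variable {R : Type*} [CommRing R]

structure IsDoubleSeq (D : Derivation ℤ R R) (F : R) (A : ℕ → ℕ → R) : Prop where
  zero_zero : A 0 0 = 1
  eq_zero_of_lt : ∀ s l : ℕ, l < s → A s l = 0
  zero_succ : ∀ l : ℕ, A 0 (l + 1) = F * D (A 0 l)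
  succ_succ : ∀ s l : ℕ, A (s + 1) (l + 1) = F * (D (A (s + 1) l) + A s l)

theorem Derivation.sum_choose_nsmul_mul_succ (D : Derivation ℤ R R) (F : R) {a b α β : ℕ → R}
    (ha : ∀ n, a (n + 1) = F * (D (a n) + α n)) (hb : ∀ n, b (n + 1) = F * (D (b n) + β n))
    (l : ℕ) :
    ∑ i ∈ range (l + 2), (l + 1).choose i • (a i * b (l + 1 - i)) =
      F * (D (∑ i ∈ range (l + 1), l.choose i • (a i * b (l - i))) +
        ∑ i ∈ range (l + 1), l.choose i • (α i * b (l - i)) +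
        ∑ i ∈ range (l + 1), l.choose i • (a i * β (l - i))) := by
  rw [sum_choose_succ_nsmul (fun i j => a i * b j), map_sum, mul_add, mul_add, mul_sum, mul_sum,
    mul_sum, ← sum_add_distrib, ← sum_add_distrib, ← sum_add_distrib]
  refine sum_congr rfl fun i hi => ?_
  rw [show l + 1 - i = l - i + 1 by have := mem_range.1 hi; omega, ha, hb, map_nsmul,
    Derivation.leibniz]
  simp only [nsmul_eq_mul, smul_eq_mul]
  ring

namespace IsDoubleSeq

variable {D : Derivation ℤ R R} {F : R} {A : ℕ → ℕ → R}

theorem zero_succ_eq_zero (h : IsDoubleSeq D F A) (l : ℕ) : A 0 (l + 1) = 0 := by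
  induction l with
  | zero => rw [h.zero_succ, h.zero_zero, D.map_one_eq_zero, mul_zero]
  | succ l ih => rw [h.zero_succ, ih, D.map_zero, mul_zero]

theorem sum_choose_nsmul_zero_mul (h : IsDoubleSeq D F A) (b : ℕ → R) (l : ℕ) :
    ∑ i ∈ range (l + 1), l.choose i • (A 0 i * b (l - i)) = b l := by
  rw [sum_eq_single 0 (fun i _ hi => ?_) (fun h0 => absurd (mem_range.2 l.succ_pos) h0)]
  · simp [h.zero_zero]
  · obtain ⟨i, rfl⟩ := Nat.exists_eq_succ_of_ne_zero hi
    rw [h.zero_succ_eq_zero, zero_mul, smul_zero]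

theorem sum_choose_nsmul_mul_zero (h : IsDoubleSeq D F A) (a : ℕ → R) (l : ℕ) :
    ∑ i ∈ range (l + 1), l.choose i • (a i * A 0 (l - i)) = a l := by
  rw [sum_eq_single l (fun i hi hil => ?_) (fun hl => absurd (self_mem_range_succ l) hl)]
  · simp [h.zero_zero]
  · rw [show l - i = l - i - 1 + 1 by have := mem_range.1 hi; omega, h.zero_succ_eq_zero,
      mul_zero, smul_zero]

theorem sum_choose_nsmul_one_mul (h : IsDoubleSeq D F A) (l t : ℕ) :
    ∑ i ∈ range (l + 1), l.choose i • (A 1 i * A t (l - i)) = (t + 1) • A (t + 1) l := by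
  induction l generalizing t with
  | zero => simp [h.eq_zero_of_lt 1 0 one_pos, h.eq_zero_of_lt (t + 1) 0 t.succ_pos]
  | succ l ih =>
    cases t with
    | zero => rw [h.sum_choose_nsmul_mul_zero, zero_add, one_smul]
    | succ t =>
      rw [D.sum_choose_nsmul_mul_succ F (h.succ_succ 0) (h.succ_succ t), ih, ih,
        h.sum_choose_nsmul_zero_mul, h.succ_succ (t + 1), map_nsmul]
      simp only [nsmul_eq_mul]
      push_cast
      ring

end IsDoubleSeq

end

/-- Let `R` be a commutative ring, `D : R → R` a derivation, `F ∈ R`, and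
`A` the associated double sequence (`A s l = 0` unless `s ≤ l`, `A 0 0 = 1`,
`A s (l+1) = F * (D (A s l) + A (s-1) l)` with `A (-1) l = 0`).  Then for every `s ≥ 2` and
every `l ≥ 0`,
`s • A s l = ∑_{r=1}^{l+1-s} C(l,r) • (A 1 r * A (s-1) (l-r))`. -/
theorem statement0 {R : Type*} [CommRing R] (D : R → R)
    (hD_add : ∀ a b : R, D (a + b) = D a + D b)
    (hD_mul : ∀ a b : R, D (a * b) = D a * b + a * D b)
    (F : R) (A : ℕ → ℕ → R)
    (hA00 : A 0 0 = 1)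
    (hAvanish : ∀ s l : ℕ, l < s → A s l = 0)
    (hArec0 : ∀ l : ℕ, A 0 (l + 1) = F * D (A 0 l))
    (hArec : ∀ s l : ℕ, A (s + 1) (l + 1) = F * (D (A (s + 1) l) + A s l))
    (s l : ℕ) (hs : 2 ≤ s) :
    s • A s l =
      ∑ r ∈ Finset.Icc 1 (l + 1 - s), (l.choose r) • (A 1 r * A (s - 1) (l - r)) := by
  let D' : Derivation ℤ R R := .mk' (AddMonoidHom.mk' D hD_add).toIntLinearMap fun a b => by
    simp only [AddMonoidHom.coe_toIntLinearMap, AddMonoidHom.mk'_apply, hD_mul, smul_eq_mul]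
    ring
  have hA : IsDoubleSeq D' F A := ⟨hA00, hAvanish, hArec0, hArec⟩
  obtain ⟨t, rfl⟩ : ∃ t, s = t + 1 := ⟨s - 1, by omega⟩
  rw [Nat.add_sub_cancel, ← hA.sum_choose_nsmul_one_mul l t]
  refine (sum_subset (fun r hr => ?_) fun r hr hr' => ?_).symm
  · simp only [mem_Icc, mem_range] at hr ⊢
    omega
  · simp only [mem_Icc, mem_range, not_and_or, not_le] at hr hr'
    rcases hr' with hr0 | hrt
    · rw [Nat.lt_one_iff.1 hr0, hAvanish 1 0 one_pos, zero_mul, smul_zero]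
    · rw [hAvanish t (l - r) (by omega), mul_zero, smul_zero]
end

section
/- Let R' be an associative unital ℚ-algebra, R ⊆ R' a commutative subalgebra, F ∈ R, and x ∈ R' such that D : r ↦ rx − xr is a derivation of R. In the algebra R'[[λ]] of formal power series in a central variable λ over R', one has exp(λxF) = Σ_{s=0}^∞ x^s α^s / s!, where exp(λxF) := Σ_{k≥0} (xF)^k λ^k / k! and α := Σ_{l≥1} A_{1,l} λ^l / l! ∈ R'[[λ]] (the right-hand sum converges coefficientwise in R'[[λ]] since α has zero constant term). Here the ordering x^s α^s, with all factors x on the left, is essential, since in general α does not commute with x. -/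
/-!
Write `D = [·, x]`. Moving the factor `x F` of `(x F)^(l+1)` past `A_{s,l}` costs a commutator,
and the recursion for `A` records exactly this, so `(x F)^l = ∑_s x^s A_{s,l}` (normal ordering).
The exponential generating functions `a_s = ∑_l A_{s,l} λ^l / l!` satisfy
`(s + 1) a_{s+1} = a_s a_1`: on coefficients this is a binomial convolution identity, proved by
induction on `l` with the Leibniz rule for `D`. Since `a_1 = α`, this gives `a_s = α^s / s!`, and
comparing coefficients of `λ^n` in `exp(λ x F) = ∑_l (x F)^l λ^l / l!` proves the theorem.
-/

open Finset PowerSeries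
open scoped Nat

section BinomialConvolution

variable {M : Type*} [Semiring M]

def binomialConvolution (u v : ℕ → M) (n : ℕ) : M :=
  ∑ p ∈ antidiagonal n, n.choose p.1 • (u p.1 * v p.2)

theorem binomialConvolution_succ (u v : ℕ → M) (n : ℕ) :
    binomialConvolution u v (n + 1) =
      binomialConvolution u (fun j => v (j + 1)) n +
        binomialConvolution (fun i => u (i + 1)) v n := by
  rw [binomialConvolution, sum_antidiagonal_choose_succ_nsmul (fun i j => u i * v j) n]
  congr 1
  refine sum_congr rfl fun p hp => ?_
  rw [← Nat.choose_symm_of_eq_add (mem_antidiagonal.1 hp).symm]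

theorem binomialConvolution_single_right (u : ℕ → M) (n : ℕ) :
    binomialConvolution u (Pi.single 0 1) n = u n := by
  rw [binomialConvolution, sum_eq_single_of_mem (n, 0) (by simp)]
  · simp
  · rintro ⟨i, _ | j⟩ hp hne
    · simp_all
    · simp

theorem binomialConvolution_single_left (v : ℕ → M) (n : ℕ) :
    binomialConvolution (Pi.single 0 1) v n = v n := by
  rw [binomialConvolution, sum_eq_single_of_mem (0, n) (by simp)]
  · simp
  · rintro ⟨_ | i, j⟩ hp hne
    · simp_all
    · simp

end BinomialConvolution

section NormalOrdering

variable {R' : Type*} [Ring R']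

def commutatorHom (x : R') : R' →+ R' :=
  AddMonoidHom.mulRight x - AddMonoidHom.mulLeft x

theorem commutatorHom_apply (x r : R') : commutatorHom x r = r * x - x * r := rfl

theorem commutatorHom_mul (x a b : R') :
    commutatorHom x (a * b) = a * commutatorHom x b + commutatorHom x a * b := by
  simp only [commutatorHom_apply]
  noncomm_ring

/-- `commutatorHom x` is the paper's `D`; the case split `zero_succ`/`succ_succ` encodes the
convention `A_{-1,l} = 0` in the recursion `A_{s,l+1} = F (D A_{s,l} + A_{s-1,l})`. -/
structure IsNormalOrderCoeffs (x F : R') (A : ℕ → ℕ → R') : Prop where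
  zero_zero : A 0 0 = 1
  eq_zero_of_lt : ∀ {s l : ℕ}, l < s → A s l = 0
  zero_succ : ∀ l, A 0 (l + 1) = F * commutatorHom x (A 0 l)
  succ_succ : ∀ s l, A (s + 1) (l + 1) = F * (commutatorHom x (A (s + 1) l) + A s l)

namespace IsNormalOrderCoeffs

variable {x F : R'} {A : ℕ → ℕ → R'} (hA : IsNormalOrderCoeffs x F A)
include hA

theorem zero_succ_eq_zero (l : ℕ) : A 0 (l + 1) = 0 := by
  induction l with
  | zero => rw [hA.zero_succ, hA.zero_zero]; simp [commutatorHom_apply]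
  | succ l ih => rw [hA.zero_succ, ih]; simp [commutatorHom_apply]

theorem zero_eq_single : A 0 = Pi.single 0 1 := by
  funext l
  cases l with
  | zero => simp [hA.zero_zero]
  | succ l => simp [hA.zero_succ_eq_zero]

theorem mul_pow_eq_sum (hFA : ∀ s l, Commute F (A s l))
    (hFDA : ∀ s l, Commute F (commutatorHom x (A s l))) (l : ℕ) :
    (x * F) ^ l = ∑ s ∈ range (l + 1), x ^ s * A s l := by
  induction l with
  | zero => simp [hA.zero_zero]
  | succ l ih =>
    set g : ℕ → R' := fun s => x ^ s * (F * commutatorHom x (A s l))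
    have hstep : ∀ s, x ^ s * A s l * (x * F) = g s + x ^ (s + 1) * (F * A s l) := fun s => by
      have : A s l * x = commutatorHom x (A s l) + x * A s l := by rw [commutatorHom_apply]; abel
      rw [mul_assoc, ← mul_assoc _ x, this, add_mul, mul_assoc, ← (hFDA s l).eq,
        (hFA s l).eq, pow_succ]
      noncomm_ring
    have hg : ∑ s ∈ range (l + 1), g s = ∑ s ∈ range (l + 1), g (s + 1) + g 0 := by
      rw [← sum_range_succ', sum_range_succ _ (l + 1)]
      simp [g, hA.eq_zero_of_lt l.lt_succ_self, commutatorHom_apply]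
    rw [pow_succ, ih, sum_mul, sum_congr rfl fun s _ => hstep s, sum_add_distrib, hg,
      sum_range_succ' _ (l + 1), hA.zero_succ, pow_zero, one_mul]
    simp only [hA.succ_succ, g, mul_add, sum_add_distrib, pow_succ, pow_zero, one_mul, mul_assoc]
    abel

theorem succ_mul_add_mul_succ (hFA : ∀ s l, Commute F (A s l)) (u i j : ℕ) :
    A (u + 1) i * A 1 (j + 1) + A (u + 1) (i + 1) * A 1 j =
      F * (commutatorHom x (A (u + 1) i * A 1 j) + A (u + 1) i * A 0 j + A u i * A 1 j) := by
  rw [hA.succ_succ 0 j, hA.succ_succ u i, ← mul_assoc, ← (hFA (u + 1) i).eq, commutatorHom_mul]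
  noncomm_ring

theorem succ_nsmul_eq_binomialConvolution (hFA : ∀ s l, Commute F (A s l)) (n : ℕ) :
    ∀ t, (t + 1) • A (t + 1) n = binomialConvolution (A t) (A 1) n := by
  induction n with
  | zero =>
    intro t
    simp [binomialConvolution, hA.eq_zero_of_lt]
  | succ n ih =>
    rintro (_ | u)
    · rw [zero_add, one_smul, hA.zero_eq_single, binomialConvolution_single_left]
    · have hleibniz : binomialConvolution (A (u + 1)) (A 1) (n + 1) =
          F * (commutatorHom x (binomialConvolution (A (u + 1)) (A 1) n) +
            binomialConvolution (A (u + 1)) (A 0) n + binomialConvolution (A u) (A 1) n) := by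
        rw [binomialConvolution_succ]
        simp only [binomialConvolution, ← sum_add_distrib, map_sum,
          mul_sum, map_nsmul, ← smul_add, mul_smul_comm, hA.succ_mul_add_mul_succ hFA]
      rw [hleibniz, ← ih, ← ih, hA.zero_eq_single, binomialConvolution_single_right, map_nsmul,
        hA.succ_succ (u + 1) n, ← mul_smul_comm, smul_add, succ_nsmul (A (u + 1) n)]
      congr 1
      abel

end IsNormalOrderCoeffs

end NormalOrdering

section ExpGenFun

variable {R' : Type*} [Ring R'] [Algebra ℚ R']

def expGenFun (u : ℕ → R') : PowerSeries R' :=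
  mk fun n => (n ! : ℚ)⁻¹ • u n

theorem coeff_expGenFun_mul (u v : ℕ → R') (n : ℕ) :
    coeff n (expGenFun u * expGenFun v) = (n ! : ℚ)⁻¹ • binomialConvolution u v n := by
  simp only [coeff_mul, expGenFun, coeff_mk, binomialConvolution, smul_sum]
  refine sum_congr rfl fun p hp => ?_
  rw [← mem_antidiagonal.1 hp, smul_mul_smul_comm, ← Nat.cast_smul_eq_nsmul ℚ, smul_smul,
    Nat.cast_add_choose]
  congr 1
  field_simp

theorem IsNormalOrderCoeffs.expGenFun_pow {x F : R'} {A : ℕ → ℕ → R'}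
    (hA : IsNormalOrderCoeffs x F A) (hFA : ∀ s l, Commute F (A s l)) (s : ℕ) :
    expGenFun (A 1) ^ s = (s ! : ℚ) • expGenFun (A s) := by
  induction s with
  | zero =>
    ext n
    cases n <;> simp [expGenFun, hA.zero_eq_single, coeff_one]
  | succ s ih =>
    ext n
    rw [pow_succ, ih, smul_mul_assoc, coeff_smul, coeff_expGenFun_mul,
      ← hA.succ_nsmul_eq_binomialConvolution hFA, coeff_smul, expGenFun, coeff_mk,
      ← Nat.cast_smul_eq_nsmul ℚ, smul_smul, smul_smul, smul_smul]
    congr 1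
    push_cast [Nat.factorial_succ]
    ring

theorem IsNormalOrderCoeffs.coeff_smul_C_pow_mul_expGenFun_pow {x F : R'} {A : ℕ → ℕ → R'}
    (hA : IsNormalOrderCoeffs x F A) (hFA : ∀ s l, Commute F (A s l)) (s n : ℕ) :
    coeff n ((s ! : ℚ)⁻¹ • (C x ^ s * expGenFun (A 1) ^ s)) =
      (n ! : ℚ)⁻¹ • (x ^ s * A s n) := by
  rw [hA.expGenFun_pow hFA, ← map_pow, mul_smul_comm, smul_smul,
    inv_mul_cancel₀ (by positivity), one_smul, coeff_C_mul, expGenFun, coeff_mk, mul_smul_comm]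

end ExpGenFun

/-- In `R'⟦λ⟧` one has `exp(λxF) = ∑_{s≥0} x^s α^s / s!`, where
`exp(λxF) := ∑_k (xF)^k λ^k / k!` and `α := ∑_{l≥1} A 1 l · λ^l / l!`.  The infinite sum on
the right converges coefficientwise: since `α` has zero constant term, for each coefficient
`n` only the terms with `s ≤ n` contribute (the terms with `s > n` have vanishing `n`-th
coefficient, which is the second conjunct below). -/
theorem statement4 {R' : Type*} [Ring R'] [Algebra ℚ R'] (R : Subalgebra ℚ R')
    (hRcomm : ∀ a ∈ R, ∀ b ∈ R, a * b = b * a)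
    (x F : R') (hF : F ∈ R)
    (hD : ∀ r ∈ R, r * x - x * r ∈ R)
    (A : ℕ → ℕ → R')
    (hAmem : ∀ s l : ℕ, A s l ∈ R)
    (hA00 : A 0 0 = 1)
    (hAvanish : ∀ s l : ℕ, l < s → A s l = 0)
    (hArec0 : ∀ l : ℕ, A 0 (l + 1) = F * (A 0 l * x - x * A 0 l))
    (hArec : ∀ s l : ℕ,
      A (s + 1) (l + 1) = F * ((A (s + 1) l * x - x * A (s + 1) l) + A s l))
    (α expXF : PowerSeries R')
    (hα : α = PowerSeries.mk fun l => if l = 0 then 0 else ((l.factorial : ℚ)⁻¹) • A 1 l)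
    (hexp : expXF = PowerSeries.mk fun k => ((k.factorial : ℚ)⁻¹) • (x * F) ^ k)
    (n : ℕ) :
    PowerSeries.coeff (R := R') n expXF =
      ∑ s ∈ Finset.range (n + 1),
        PowerSeries.coeff (R := R') n
          (((s.factorial : ℚ)⁻¹) • ((PowerSeries.C (R := R') x) ^ s * α ^ s)) ∧
    ∀ s : ℕ, n < s →
      PowerSeries.coeff (R := R') n
        (((s.factorial : ℚ)⁻¹) • ((PowerSeries.C (R := R') x) ^ s * α ^ s)) = 0 := by
  have hA : IsNormalOrderCoeffs x F A := ⟨hA00, hAvanish _ _, hArec0, hArec⟩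
  have hFA : ∀ s l, Commute F (A s l) := fun s l => hRcomm _ hF _ (hAmem s l)
  have hFDA : ∀ s l, Commute F (commutatorHom x (A s l)) := fun s l =>
    hRcomm _ hF _ (hD _ (hAmem s l))
  have hα' : α = expGenFun (A 1) := by
    ext (_ | l) <;> simp [hα, expGenFun, hAvanish 1 0 one_pos]
  subst hexp
  simp only [hα', hA.coeff_smul_C_pow_mul_expGenFun_pow hFA]
  refine ⟨?_, fun s hs => by rw [hA.eq_zero_of_lt hs, mul_zero, smul_zero]⟩
  rw [coeff_mk, hA.mul_pow_eq_sum hFA hFDA, smul_sum]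
end

section
/- Let R' be an associative unital ℚ-algebra, R ⊆ R' a commutative subalgebra, F ∈ R, and x ∈ R' such that D : r ↦ rx − xr is a derivation of R. Then for every G ∈ R and every n ≥ 0, the n-fold iterated commutator ad(xF)^n(G) equals (−1)^n (F·D)^n(G), where ad(xF)(r) := (xF)r − r(xF) and (F·D)(r) := F·D(r). In particular ad(xF)^n(G) lies in R for all n. -/
/-! Because `F` commutes with both `r` and `D r` for `r ∈ R`, `ad(xF) = -F·D` on `R`; since
`F·D` maps `R` into `R` and `ad(xF)` is additive, the `n`-th iterates differ by `(-1)^n`. -/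

open Function Set

theorem iterate_eq_neg_one_pow_mul_iterate {A : Type*} [Monoid A] [HasDistribNeg A]
    {f g : A → A} {S : Set A} (hf : Function.Commute f Neg.neg) (hg : MapsTo g S S)
    (hfg : ∀ a ∈ S, f a = -g a) (n : ℕ) {a : A} (ha : a ∈ S) :
    f^[n] a = (-1) ^ n * g^[n] a := by
  induction n generalizing a with
  | zero => simp
  | succ n ih =>
    calc f^[n + 1] a = f^[n] (-g a) := by rw [iterate_succ_apply, hfg a ha]
      _ = -((-1) ^ n * g^[n] (g a)) := by rw [(hf.iterate_left n).eq, ih (hg ha)]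
      _ = (-1) ^ (n + 1) * g^[n + 1] a := by rw [pow_succ', neg_one_mul, neg_mul, iterate_succ_apply]

theorem commutator_mul_right_eq_neg_mul_commutator {A : Type*} [Ring A] {x F r : A}
    (hr : Commute F r) (hxr : Commute F (r * x - x * r)) :
    x * F * r - r * (x * F) = -(F * (r * x - x * r)) := by
  rw [hxr.eq, mul_assoc x, hr.eq]
  noncomm_ring

/-- Let `R'` be an associative unital `ℚ`-algebra, `R ⊆ R'` a commutative
subalgebra, `F ∈ R`, `x ∈ R'` such that `D : r ↦ r*x - x*r` maps `R` into `R`.  Then for every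
`G ∈ R` and `n ≥ 0`, `ad(xF)^n(G) = (-1)^n (F·D)^n(G)`, where `ad(xF)(r) = (xF)r - r(xF)` and
`(F·D)(r) = F·D(r)`.  In particular `ad(xF)^n(G)` lies in `R`. -/
theorem statement5 {R' : Type*} [Ring R'] [Algebra ℚ R'] (R : Subalgebra ℚ R')
    (hRcomm : ∀ a ∈ R, ∀ b ∈ R, a * b = b * a)
    (x F : R') (hF : F ∈ R)
    (hD : ∀ r ∈ R, r * x - x * r ∈ R)
    (G : R') (hG : G ∈ R) (n : ℕ) :
    (fun r => (x * F) * r - r * (x * F))^[n] G =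
      (-1 : R') ^ n * (fun r => F * (r * x - x * r))^[n] G ∧
    (fun r => (x * F) * r - r * (x * F))^[n] G ∈ R := by
  have hmaps : MapsTo (fun r => F * (r * x - x * r)) R R := fun r hr => mul_mem hF (hD r hr)
  have hodd : Function.Commute (fun r => (x * F) * r - r * (x * F)) Neg.neg := fun r => by
    simp only [mul_neg, neg_mul, neg_sub_neg, neg_sub]
  have hiter := iterate_eq_neg_one_pow_mul_iterate hodd hmaps
    (fun r hr => commutator_mul_right_eq_neg_mul_commutator (hRcomm F hF r hr)
      (hRcomm F hF _ (hD r hr))) n hG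
  exact ⟨hiter, hiter ▸ mul_mem (pow_mem (neg_mem (one_mem R)) n) (hmaps.iterate n hG)⟩
end

section
/- Let R' be an associative unital ℚ-algebra, R ⊆ R' a commutative subalgebra, x₁,…,x_n ∈ R' pairwise commuting elements such that each map D_i : r ↦ r x_i − x_i r sends R into R and the resulting derivations D₁,…,D_n of R pairwise commute, and let F₁,…,F_n ∈ R. In R'[[λ]] one has exp(λ Σ_{i=1}^n x_i F_i) = Σ_{s₁,…,s_n ≥ 0} x₁^{s₁} ⋯ x_n^{s_n} α₁^{s₁} ⋯ α_n^{s_n} / (s₁! ⋯ s_n!), where exp(λ Σ x_i F_i) := Σ_{k≥0} (Σ_i x_i F_i)^k λ^k / k! and α_i := Σ_{l≥1} A_{0,…,1,…,0,l} λ^l / l! (with 1 in the i-th place), the right-hand sum converging coefficientwise since each α_i has zero constant term. -/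
/-!
Put `egf A s := ∑ₗ A_{s,l} λ^l / l!`, so that `αᵢ = egf A eᵢ`. The recursion for `A` says that
the family `egf A` solves the linear system `φ_s' = ∑ⱼ Fⱼ (Dⱼ φ_s + φ_{s-eⱼ})`, and a solution of
such a system (also with an inhomogeneous term) is determined by its constant terms. Both
`αᵢ · egf A s` and `(sᵢ + 1) · egf A (s + eᵢ)` solve it with the extra term `Fᵢ · egf A s` and
vanish at `λ = 0`, hence they agree, and by induction `α^s = s! · egf A s`. On the other side,
moving every `xᵢ` in `(∑ xᵢFᵢ)^m` to the left through `r xᵢ = xᵢ r + Dᵢ r` produces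
`∑_s x^s A_{s,m}`, by the same recursion. Comparing coefficients of `λ^m` gives the formula.
-/

open PowerSeries Finset Function

theorem List.prod_ofFn_update_mul {M : Type*} [Monoid M] {n : ℕ} (f : Fin n → M) (i : Fin n)
    (a : M) (ha : ∀ j, Commute a (f j)) :
    (List.ofFn (update f i (a * f i))).prod = a * (List.ofFn f).prod := by
  conv_rhs => rw [← update_eq_self i f]
  have hc : Commute a (List.take i (List.ofFn f)).prod :=
    Commute.list_prod_right _ _ fun y hy => by
      obtain ⟨j, rfl⟩ := List.mem_ofFn.mp (List.mem_of_mem_take hy)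
      exact ha j
  simp only [List.ofFn_eq_map, (List.nodup_finRange n).map_update, List.mem_finRange,
    if_true, List.idxOf_finRange, List.prod_set, List.length_map, List.length_finRange,
    Fin.is_lt, mul_assoc] at hc ⊢
  exact (hc.left_comm _).symm

def prodPow {M : Type*} [Monoid M] {n : ℕ} (y : Fin n → M) (s : Fin n → ℕ) : M :=
  (List.ofFn fun j => y j ^ s j).prod

section prodPow
variable {M : Type*} [Monoid M] {n : ℕ}

@[simp] theorem prodPow_zero (y : Fin n → M) : prodPow y 0 = 1 := by
  simp [prodPow]

theorem map_prodPow {N F : Type*} [Monoid N] [FunLike F M N] [MonoidHomClass F M N] (f : F)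
    (y : Fin n → M) (s : Fin n → ℕ) :
    f (prodPow y s) = prodPow (fun j => f (y j)) s := by
  simp [prodPow, map_list_prod, List.map_ofFn, Function.comp_def]

theorem commute_prodPow {y : Fin n → M} {a : M} (ha : ∀ j, Commute a (y j)) (s : Fin n → ℕ) :
    Commute a (prodPow y s) :=
  Commute.list_prod_right _ _ fun _ hz => by
    obtain ⟨j, rfl⟩ := List.mem_ofFn.mp hz
    exact (ha j).pow_right _

theorem prodPow_update_succ {y : Fin n → M} (hy : ∀ i j, Commute (y i) (y j)) (s : Fin n → ℕ)
    (i : Fin n) :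
    prodPow y (update s i (s i + 1)) = y i * prodPow y s := by
  rw [prodPow, prodPow, ← List.prod_ofFn_update_mul _ i _ fun j => (hy i j).pow_right _]
  congr 2
  funext j
  rw [← pow_succ', apply_update (fun j e => y j ^ e)]
end prodPow

theorem Pi.induction_update_succ {ι : Type*} [Finite ι] [DecidableEq ι] {p : (ι → ℕ) → Prop}
    (zero : p 0) (succ : ∀ s i, p s → p (update s i (s i + 1))) (s : ι → ℕ) : p s := by
  induction s using WellFoundedLT.induction with
  | _ s ih =>
    obtain rfl | hs := eq_or_ne s 0
    · exact zero
    obtain ⟨i, hi⟩ : ∃ i, s i ≠ 0 := Function.ne_iff.mp hs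
    have hlt : update s i (s i - 1) < s := by
      refine lt_of_le_of_ne (update_le_iff.mpr ⟨Nat.sub_le _ _, fun _ _ => le_rfl⟩) fun h => ?_
      have := congrFun h i
      simp only [update_self] at this
      omega
    simpa [Nat.sub_add_cancel (Nat.pos_of_ne_zero hi)] using succ _ i (ih _ hlt)

theorem sum_piFinset_range_update_succ {M : Type*} [AddCommMonoid M] {n N : ℕ}
    (g : (Fin n → ℕ) → M) (i : Fin n) (hg : ∀ t, t i = N → g t = 0) :
    ∑ s ∈ Fintype.piFinset (fun _ => range N), g (update s i (s i + 1)) =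
      ∑ t ∈ Fintype.piFinset (fun _ => range N) with t i ≠ 0, g t := by
  rw [← sum_filter_of_ne (p := fun s => s i + 1 ≠ N) fun s _ h hs => h (hg _ (by simpa using hs))]
  refine sum_nbij' (fun s => update s i (s i + 1)) (fun t => update t i (t i - 1))
    (fun s h => ?_) (fun t h => ?_) (fun s _ => by simp) (fun t h => ?_) fun s _ => rfl
  all_goals simp only [mem_filter, Fintype.mem_piFinset, mem_range] at h ⊢
  · refine ⟨fun j => ?_, by simp⟩
    rcases eq_or_ne j i with rfl | hj
    · simpa using Nat.lt_of_le_of_ne (h.1 j) h.2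
    · simpa [hj] using h.1 j
  · refine ⟨fun j => ?_, ?_⟩
    · rcases eq_or_ne j i with rfl | hj
      · simpa using Nat.sub_lt_of_lt (h.1 j)
      · simpa [hj] using h.1 j
    · simpa [Nat.sub_add_cancel (Nat.pos_of_ne_zero h.2)] using (h.1 i).ne
  · simp [Nat.sub_add_cancel (Nat.pos_of_ne_zero h.2)]

namespace PowerSeries
variable {S : Type*} [Semiring S]

/-- Mathlib's `PowerSeries.derivative` needs a commutative coefficient ring. -/
noncomputable def formalDeriv (f : S⟦X⟧) : S⟦X⟧ :=
  mk fun l => (l + 1) • coeff (l + 1) f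

@[simp] theorem coeff_formalDeriv (f : S⟦X⟧) (l : ℕ) :
    coeff l (formalDeriv f) = (l + 1) • coeff (l + 1) f :=
  coeff_mk _ _

theorem formalDeriv_mul (f g : S⟦X⟧) :
    formalDeriv (f * g) = formalDeriv f * g + f * formalDeriv g := by
  ext l
  have hsplit : ∀ p ∈ antidiagonal (l + 1), (l + 1) • (coeff p.1 f * coeff p.2 g) =
      (p.1 • coeff p.1 f) * coeff p.2 g + coeff p.1 f * (p.2 • coeff p.2 g) := by
    intro p hp
    rw [← mem_antidiagonal.mp hp, add_smul, smul_mul_assoc, mul_smul_comm]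
  rw [coeff_formalDeriv, coeff_mul, smul_sum, sum_congr rfl hsplit, sum_add_distrib, map_add,
    coeff_mul, coeff_mul, Nat.sum_antidiagonal_succ, Nat.sum_antidiagonal_succ']
  simp

theorem formalDeriv_nsmul (k : ℕ) (f : S⟦X⟧) : formalDeriv (k • f) = k • formalDeriv f := by
  ext l
  rw [coeff_formalDeriv, map_nsmul, map_nsmul, coeff_formalDeriv, smul_comm]

theorem commute_of_coeff_commute {f g : S⟦X⟧} (h : ∀ i j, Commute (coeff i f) (coeff j g)) :
    Commute f g := by
  ext l
  rw [coeff_mul, coeff_mul, ← Nat.sum_antidiagonal_swap]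
  simp only [Prod.fst_swap, Prod.snd_swap]
  exact sum_congr rfl fun p _ => (h p.2 p.1).eq

end PowerSeries

section recStep
variable {S : Type*} [Ring S] {n : ℕ}

/-- `∑ⱼ Gⱼ (Dⱼ (a s) + a (s - eⱼ))` with `Dⱼ r = r yⱼ - yⱼ r`: the recursion for `A` reads
`A · (l + 1) = recStep x F (A · l)`. -/
def recStep (y G : Fin n → S) (a : (Fin n → ℕ) → S) (s : Fin n → ℕ) : S :=
  ∑ j, G j * ((a s * y j - y j * a s) + if s j = 0 then 0 else a (update s j (s j - 1)))

theorem coeff_recStep (y G : Fin n → S) (Ψ : (Fin n → ℕ) → S⟦X⟧) (s : Fin n → ℕ) (l : ℕ) :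
    coeff l (recStep (fun j => C (y j)) (fun j => C (G j)) Ψ s) =
      recStep y G (fun t => coeff l (Ψ t)) s := by
  simp [recStep, coeff_C_mul, coeff_mul_C, apply_ite]

theorem recStep_smul {K : Type*} [CommSemiring K] [Algebra K S] (y G : Fin n → S)
    (c : K) (a : (Fin n → ℕ) → S) (s : Fin n → ℕ) :
    recStep y G (fun t => c • a t) s = c • recStep y G a s := by
  simp only [recStep, smul_sum]
  refine sum_congr rfl fun j _ => ?_
  rw [← mul_smul_comm c (G j), smul_add, smul_sub, smul_ite, smul_zero, smul_mul_assoc,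
    mul_smul_comm]

theorem recStep_single (y G : Fin n → S) (a : (Fin n → ℕ) → S) (i : Fin n) :
    recStep y G a (Pi.single i 1) =
      ∑ j, G j * (a (Pi.single i 1) * y j - y j * a (Pi.single i 1)) + G i * a 0 := by
  rw [recStep]
  simp only [mul_add, sum_add_distrib]
  congr 1
  rw [sum_eq_single i]
  · have : update (Pi.single i 1 : Fin n → ℕ) i 0 = 0 := by
      ext j
      by_cases h : j = i <;> simp [h]
    simp [this]
  · intro j _ hj
    simp [hj]
  · simp

theorem recStep_const_mul {y G : Fin n → S} {b : S} (hb : ∀ j, Commute b (G j))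
    (a : (Fin n → ℕ) → S) (s : Fin n → ℕ) :
    recStep y G (fun t => b * a t) s =
      (∑ j, G j * (b * y j - y j * b)) * a s + b * recStep y G a s := by
  simp only [recStep, sum_mul, mul_sum, ← sum_add_distrib]
  refine sum_congr rfl fun j _ => ?_
  rw [← mul_assoc b (G j), (hb j).eq, mul_assoc (G j) _ (a s), mul_assoc (G j) b, ← mul_add,
    mul_add b, mul_ite, mul_zero]
  noncomm_ring

theorem recStep_update_succ (y G : Fin n → S) (a : (Fin n → ℕ) → S) (i : Fin n) (s : Fin n → ℕ) :
    recStep y G (fun t => (t i + 1) • a (update t i (t i + 1))) s + G i * a s =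
      (s i + 1) • recStep y G a (update s i (s i + 1)) := by
  simp only [recStep, smul_sum]
  rw [Fintype.sum_eq_add_sum_compl i, Fintype.sum_eq_add_sum_compl i, add_right_comm]
  congr 1
  · simp only [update_self, update_idem, Nat.add_sub_cancel, update_eq_self, Nat.succ_ne_zero,
      if_false]
    split_ifs with h
    · simp [h, mul_add]
    · rw [Nat.sub_add_cancel (Nat.pos_of_ne_zero h), update_eq_self]
      simp only [smul_mul_assoc, mul_smul_comm, smul_sub, mul_add, mul_sub, add_mul, smul_add,
        add_smul, one_smul]
      abel
  · refine sum_congr rfl fun j hj => ?_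
    have hj : j ≠ i := by simpa using hj
    rw [update_of_ne hj, update_of_ne hj.symm, update_comm hj.symm]
    split_ifs <;>
      simp only [smul_mul_assoc, mul_smul_comm, smul_sub, mul_add, mul_sub, smul_add, add_zero]

theorem eq_of_formalDeriv_eq_recStep_add [IsAddTorsionFree S] {y G : Fin n → S}
    {Ψ Ψ' H : (Fin n → ℕ) → S⟦X⟧} (h0 : ∀ s, constantCoeff (Ψ s) = constantCoeff (Ψ' s))
    (hΨ : ∀ s, formalDeriv (Ψ s) = recStep (fun j => C (y j)) (fun j => C (G j)) Ψ s + H s)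
    (hΨ' : ∀ s, formalDeriv (Ψ' s) = recStep (fun j => C (y j)) (fun j => C (G j)) Ψ' s + H s) :
    Ψ = Ψ' := by
  suffices h : ∀ l s, coeff l (Ψ s) = coeff l (Ψ' s) from funext fun s => ext fun l => h l s
  intro l
  induction l with
  | zero => simpa using h0
  | succ l ih =>
    intro s
    have hl : coeff l (formalDeriv (Ψ s)) = coeff l (formalDeriv (Ψ' s)) := by
      simp only [hΨ, hΨ', map_add, coeff_recStep, ih]
    rw [coeff_formalDeriv, coeff_formalDeriv] at hl
    exact nsmul_right_injective l.succ_ne_zero hl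

end recStep

section recursion
variable {S : Type*} [Ring S] {n : ℕ} {x F : Fin n → S} {A : (Fin n → ℕ) → ℕ → S}
  (hA0 : A 0 0 = 1) (hAinit : ∀ s : Fin n → ℕ, s ≠ 0 → A s 0 = 0)
  (hArec : ∀ s l, A s (l + 1) = recStep x F (fun t => A t l) s)

include hAinit hArec in
theorem eq_zero_of_lt_sum {l : ℕ} {s : Fin n → ℕ} (hl : l < ∑ i, s i) : A s l = 0 := by
  induction l generalizing s with
  | zero => exact hAinit s (by rintro rfl; simp at hl)
  | succ l ih =>
    refine (hArec s l).trans (sum_eq_zero fun j _ => ?_)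
    beta_reduce
    rw [ih (by omega)]
    split_ifs with hj
    · simp
    · have : ∑ i, update s j (s j - 1) i + 1 = ∑ i, s i := by
        rw [sum_update_of_mem (mem_univ j), sum_eq_add_sum_sdiff_singleton_of_mem (mem_univ j) s]
        omega
      rw [ih (by omega)]
      simp

variable [Algebra ℚ S]

noncomputable def egf (A : (Fin n → ℕ) → ℕ → S) (s : Fin n → ℕ) : S⟦X⟧ :=
  mk fun l => (l.factorial : ℚ)⁻¹ • A s l

@[simp] theorem coeff_egf (s : Fin n → ℕ) (l : ℕ) :
    coeff l (egf A s) = (l.factorial : ℚ)⁻¹ • A s l :=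
  coeff_mk _ _

theorem constantCoeff_egf (s : Fin n → ℕ) : constantCoeff (egf A s) = A s 0 := by
  simp [← coeff_zero_eq_constantCoeff_apply]

include hA0 hArec in
theorem egf_zero : egf A 0 = 1 := by
  have hA : ∀ l, A 0 l = if l = 0 then 1 else 0 := by
    intro l
    induction l with
    | zero => simp [hA0]
    | succ l ih => simp [hArec, recStep, ih]
  ext l
  simp [hA, coeff_one]
  split_ifs <;> simp [*]

include hArec in
theorem formalDeriv_egf (s : Fin n → ℕ) :
    formalDeriv (egf A s) = recStep (fun j => C (x j)) (fun j => C (F j)) (egf A) s := by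
  ext l
  have hfac : ((l + 1 : ℕ) : ℚ) * ((l + 1).factorial : ℚ)⁻¹ = (l.factorial : ℚ)⁻¹ := by
    rw [Nat.factorial_succ]
    push_cast
    field_simp
  rw [coeff_formalDeriv, coeff_egf, coeff_recStep, hArec, ← Nat.cast_smul_eq_nsmul ℚ, smul_smul]
  simp only [coeff_egf, recStep_smul, hfac]

variable {R : Subalgebra ℚ S} (hRcomm : ∀ a ∈ R, ∀ b ∈ R, a * b = b * a)
  (hF : ∀ i, F i ∈ R) (hAmem : ∀ s l, A s l ∈ R)

include hRcomm in
theorem commute_of_forall_coeff_mem {f g : S⟦X⟧} (hf : ∀ k, coeff k f ∈ R)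
    (hg : ∀ k, coeff k g ∈ R) : Commute f g :=
  commute_of_coeff_commute fun i j => hRcomm _ (hf i) _ (hg j)

theorem coeff_C_mem {a : S} (ha : a ∈ R) (k : ℕ) : coeff k (C a) ∈ R := by
  rw [coeff_C]
  split_ifs
  exacts [ha, R.zero_mem]

include hAmem in
theorem coeff_egf_mem (s : Fin n → ℕ) (l : ℕ) : coeff l (egf A s) ∈ R := by
  rw [coeff_egf]
  exact R.smul_mem (hAmem s l) _

include hA0 hAinit hArec hRcomm hF hAmem in
theorem egf_single_mul_egf (i : Fin n) (s : Fin n → ℕ) :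
    egf A (Pi.single i 1) * egf A s = (s i + 1) • egf A (update s i (s i + 1)) := by
  have := IsAddTorsionFree.of_module_rat (M := S)
  have hcomm : ∀ j, Commute (egf A (Pi.single i 1)) (C (F j)) := fun j =>
    commute_of_forall_coeff_mem hRcomm (coeff_egf_mem hAmem _) (coeff_C_mem (hF j))
  refine congrFun (eq_of_formalDeriv_eq_recStep_add (y := x) (G := F)
    (Ψ := fun s => egf A (Pi.single i 1) * egf A s)
    (Ψ' := fun s => (s i + 1) • egf A (update s i (s i + 1)))
    (H := fun s => C (F i) * egf A s) (fun s => ?_) (fun s => ?_) (fun s => ?_)) s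
  · have hne : update s i (s i + 1) ≠ 0 := fun h => by simpa using congrFun h i
    simp [constantCoeff_egf, hAinit _ hne, hAinit (Pi.single i 1) (by simp)]
  · rw [formalDeriv_mul, formalDeriv_egf hArec, formalDeriv_egf hArec, recStep_single,
      egf_zero hA0 hArec, recStep_const_mul hcomm, mul_one, add_mul]
    abel
  · rw [formalDeriv_nsmul, formalDeriv_egf hArec, recStep_update_succ]

include hA0 hAinit hArec hRcomm hF hAmem in
theorem prodPow_egf_single (s : Fin n → ℕ) :
    prodPow (fun i => egf A (Pi.single i 1)) s = (∏ i, (s i).factorial) • egf A s := by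
  induction s using Pi.induction_update_succ with
  | zero => simp [egf_zero hA0 hArec]
  | succ s i ih =>
    have hfac : ∏ j, (update s i (s i + 1) j).factorial = (∏ j, (s j).factorial) * (s i + 1) := by
      simp_rw [apply_update (fun (_ : Fin n) (k : ℕ) => k.factorial)]
      rw [prod_update_of_mem (mem_univ i), prod_eq_mul_prod_sdiff_singleton_of_mem (mem_univ i),
        Nat.factorial_succ]
      ring
    rw [prodPow_update_succ (fun i j => commute_of_forall_coeff_mem hRcomm
      (coeff_egf_mem hAmem _) (coeff_egf_mem hAmem _)), ih, mul_smul_comm,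
      egf_single_mul_egf hA0 hAinit hArec hRcomm hF hAmem, smul_smul, hfac]

variable (hx : ∀ i j, Commute (x i) (x j)) (hD : ∀ i, ∀ r ∈ R, r * x i - x i * r ∈ R)

include hAinit hArec hRcomm hF hAmem hx hD in
theorem sum_prodPow_mul_mul_sum {m N : ℕ} (hN : m + 1 < N) :
    (∑ s ∈ Fintype.piFinset (fun _ => range N), prodPow x s * A s m) * ∑ i, x i * F i =
      ∑ s ∈ Fintype.piFinset (fun _ => range N), prodPow x s * A s (m + 1) := by
  have hreindex : ∀ i, ∑ s ∈ Fintype.piFinset (fun _ => range N),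
      prodPow x (update s i (s i + 1)) * (A s m * F i) =
      ∑ t ∈ Fintype.piFinset (fun _ => range N),
        if t i = 0 then 0 else prodPow x t * (A (update t i (t i - 1)) m * F i) := by
    intro i
    have hvanish : ∀ t : Fin n → ℕ, t i = N → A (update t i (t i - 1)) m = 0 := fun t ht =>
      eq_zero_of_lt_sum hAinit hArec <| calc
        m < update t i (t i - 1) i := by rw [update_self]; omega
        _ ≤ ∑ j, update t i (t i - 1) j := single_le_sum (fun _ _ => Nat.zero_le _) (mem_univ i)
    have := sum_piFinset_range_update_succ
      (fun t => prodPow x t * (A (update t i (t i - 1)) m * F i)) i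
      fun t ht => by rw [hvanish t ht, zero_mul, mul_zero]
    simp only [update_self, update_idem, Nat.add_sub_cancel, update_eq_self] at this
    simp_rw [this, sum_filter, ite_not]
  calc (∑ s ∈ Fintype.piFinset (fun _ => range N), prodPow x s * A s m) * ∑ i, x i * F i
      = ∑ i, (∑ s ∈ Fintype.piFinset (fun _ => range N),
          prodPow x (update s i (s i + 1)) * (A s m * F i) +
          ∑ s ∈ Fintype.piFinset (fun _ => range N),
            prodPow x s * ((A s m * x i - x i * A s m) * F i)) := by
        simp only [sum_mul, mul_sum, ← sum_add_distrib]
        refine sum_congr rfl fun i _ => sum_congr rfl fun s _ => ?_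
        rw [prodPow_update_succ hx, (commute_prodPow (hx i) s).eq]
        noncomm_ring
    _ = ∑ s ∈ Fintype.piFinset (fun _ => range N), prodPow x s * A s (m + 1) := by
        simp only [hreindex, ← sum_add_distrib]
        rw [sum_comm]
        refine sum_congr rfl fun s _ => ?_
        rw [hArec, recStep, mul_sum]
        refine sum_congr rfl fun i _ => ?_
        have hmem : (A s m * x i - x i * A s m +
            if s i = 0 then 0 else A (update s i (s i - 1)) m) ∈ R :=
          R.add_mem (hD i _ (hAmem s m)) (by split_ifs; exacts [R.zero_mem, hAmem _ _])
        rw [hRcomm _ (hF i) _ hmem]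
        split_ifs <;> noncomm_ring

include hA0 hAinit hArec hRcomm hF hAmem hx hD in
theorem sum_mul_pow_eq_sum_prodPow_mul {m N : ℕ} (hN : m < N) :
    (∑ i, x i * F i) ^ m = ∑ s ∈ Fintype.piFinset (fun _ => range N), prodPow x s * A s m := by
  induction m with
  | zero =>
    rw [pow_zero, sum_eq_single_of_mem 0 (Fintype.mem_piFinset.mpr fun _ => mem_range.mpr hN)
      fun s _ hs => by rw [hAinit s hs, mul_zero]]
    simp [hA0]
  | succ m ih =>
    rw [pow_succ, ih (by omega), sum_prodPow_mul_mul_sum hAinit hArec hRcomm hF hAmem hx hD hN]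

end recursion

theorem statement7_general {R' : Type*} [Ring R'] [Algebra ℚ R'] (R : Subalgebra ℚ R')
    (hRcomm : ∀ a ∈ R, ∀ b ∈ R, a * b = b * a)
    {n : ℕ} (x F : Fin n → R')
    (hx_comm : ∀ i j, x i * x j = x j * x i)
    (hF : ∀ i, F i ∈ R)
    (hD : ∀ i, ∀ r ∈ R, r * x i - x i * r ∈ R)
    (A : (Fin n → ℕ) → ℕ → R')
    (hAmem : ∀ s l, A s l ∈ R)
    (hA0 : A 0 0 = 1)
    (hAinit : ∀ s : Fin n → ℕ, s ≠ 0 → A s 0 = 0)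
    (hArec : ∀ (s : Fin n → ℕ) (l : ℕ),
      A s (l + 1) = ∑ i, F i * ((A s l * x i - x i * A s l) +
        if s i = 0 then 0 else A (Function.update s i (s i - 1)) l))
    (α : Fin n → PowerSeries R')
    (hα : ∀ i, α i = PowerSeries.mk fun l =>
      if l = 0 then 0 else ((l.factorial : ℚ)⁻¹) • A (Pi.single i 1) l)
    (expSum : PowerSeries R')
    (hexp : expSum = PowerSeries.mk fun k => ((k.factorial : ℚ)⁻¹) • (∑ i, x i * F i) ^ k)
    (term : (Fin n → ℕ) → PowerSeries R')
    (hterm : ∀ sv : Fin n → ℕ, term sv =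
      ((∏ i, ((sv i).factorial : ℚ))⁻¹) •
        ((List.ofFn fun i => (PowerSeries.C (x i)) ^ sv i).prod *
         (List.ofFn fun i => (α i) ^ sv i).prod))
    (m : ℕ) :
    PowerSeries.coeff m expSum =
      ∑ sv ∈ Fintype.piFinset (fun _ : Fin n => Finset.range (m + 1)),
        PowerSeries.coeff m (term sv) ∧
    ∀ sv : Fin n → ℕ, m < ∑ i, sv i → PowerSeries.coeff m (term sv) = 0 := by
  have hα_egf : α = fun i => egf A (Pi.single i 1) := by
    funext i
    ext (_ | l)
    · simp [hα, hAinit (Pi.single i 1) (by simp)]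
    · simp [hα]
  have hcoeff : ∀ sv, coeff m (term sv) = (m.factorial : ℚ)⁻¹ • (prodPow x sv * A sv m) := by
    intro sv
    have hprod : ((∏ i, (sv i).factorial : ℕ) : ℚ) ≠ 0 := by positivity
    rw [hterm]
    change coeff m ((_ : ℚ) • (prodPow (fun i => C (x i)) sv * prodPow α sv)) = _
    rw [hα_egf, prodPow_egf_single hA0 hAinit hArec hRcomm hF hAmem, ← map_prodPow,
      mul_smul_comm, ← Nat.cast_smul_eq_nsmul ℚ, smul_smul, ← Nat.cast_prod,
      inv_mul_cancel₀ hprod, one_smul, coeff_C_mul, coeff_egf, mul_smul_comm]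
  refine ⟨?_, fun sv hsv => ?_⟩
  · rw [hexp, coeff_mk, sum_mul_pow_eq_sum_prodPow_mul hA0 hAinit hArec hRcomm hF hAmem hx_comm hD
      m.lt_succ_self, smul_sum]
    exact sum_congr rfl fun sv _ => (hcoeff sv).symm
  · rw [hcoeff, eq_zero_of_lt_sum hAinit hArec hsv, mul_zero, smul_zero]

/-- Multivariable exponential formula.  In `R'⟦λ⟧` one has
`exp(λ ∑ᵢ xᵢFᵢ) = ∑_{s₁,…,s_n ≥ 0} x₁^{s₁}⋯x_n^{s_n} α₁^{s₁}⋯α_n^{s_n} / (s₁!⋯s_n!)`,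
where `exp(λ ∑ xᵢFᵢ) := ∑_k (∑ᵢ xᵢFᵢ)^k λ^k / k!` and
`αᵢ := ∑_{l≥1} A (eᵢ) l · λ^l / l!` (`eᵢ` the `i`-th standard basis vector).
The right-hand sum converges coefficientwise since each `αᵢ` has zero constant term: the
`m`-th coefficient of the term indexed by `(s₁,…,s_n)` vanishes whenever `∑ᵢ sᵢ > m` (second
conjunct), so only finitely many terms contribute to each coefficient (first conjunct). -/
theorem statement7 {R' : Type*} [Ring R'] [Algebra ℚ R'] (R : Subalgebra ℚ R')
    (hRcomm : ∀ a ∈ R, ∀ b ∈ R, a * b = b * a)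
    {n : ℕ} (x F : Fin n → R')
    (hx_comm : ∀ i j, x i * x j = x j * x i)
    (hF : ∀ i, F i ∈ R)
    (hD : ∀ i, ∀ r ∈ R, r * x i - x i * r ∈ R)
    (hD_comm : ∀ i j, ∀ r ∈ R,
      (r * x j - x j * r) * x i - x i * (r * x j - x j * r) =
      (r * x i - x i * r) * x j - x j * (r * x i - x i * r))
    (A : (Fin n → ℕ) → ℕ → R')
    (hAmem : ∀ s l, A s l ∈ R)
    (hA0 : A 0 0 = 1)
    (hAinit : ∀ s : Fin n → ℕ, s ≠ 0 → A s 0 = 0)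
    (hArec : ∀ (s : Fin n → ℕ) (l : ℕ),
      A s (l + 1) = ∑ i, F i * ((A s l * x i - x i * A s l) +
        if s i = 0 then 0 else A (Function.update s i (s i - 1)) l))
    (α : Fin n → PowerSeries R')
    (hα : ∀ i, α i = PowerSeries.mk fun l =>
      if l = 0 then 0 else ((l.factorial : ℚ)⁻¹) • A (Pi.single i 1) l)
    (expSum : PowerSeries R')
    (hexp : expSum = PowerSeries.mk fun k => ((k.factorial : ℚ)⁻¹) • (∑ i, x i * F i) ^ k)
    (term : (Fin n → ℕ) → PowerSeries R')
    (hterm : ∀ sv : Fin n → ℕ, term sv =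
      ((∏ i, ((sv i).factorial : ℚ))⁻¹) •
        ((List.ofFn fun i => (PowerSeries.C (x i)) ^ sv i).prod *
         (List.ofFn fun i => (α i) ^ sv i).prod))
    (m : ℕ) :
    PowerSeries.coeff m expSum =
      ∑ sv ∈ Fintype.piFinset (fun _ : Fin n => Finset.range (m + 1)),
        PowerSeries.coeff m (term sv) ∧
    ∀ sv : Fin n → ℕ, m < ∑ i, sv i → PowerSeries.coeff m (term sv) = 0 :=
  statement7_general R hRcomm x F hx_comm hF hD A hAmem hA0 hAinit hArec α hα expSum hexp term hterm
    m
end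

section
/- For every integer l ≥ 2 and all real numbers k, x with (l−1)|k|^{l−1} < 1, the double series Σ_{m=0}^∞ Σ_{j=0}^∞ (Π_{i=0}^{j−1} (m + i(l−1))) · k^{m+j(l−1)} · x^m / (j! · m!) converges absolutely, and its sum equals exp( k·x / (1 − (l−1)k^{l−1})^{1/(l−1)} ). (This is the identity e^{x (d/dx)^l} e^{kx} = exp( kx (1 − (l−1)k^{l−1})^{−1/(l−1)} ) of the paper, written out termwise.) -/
/-!
Since `∏_{i<j} (m + i(l-1)) = (l-1)^j (a)_j` with `a = m/(l-1)` and `(a)_j` the rising factorial,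
summing over `j` first gives the generalized binomial series
`∑_j (a)_j w^j / j! = (1 - w)^{-a}` at `w = (l-1) k^{l-1}`, `|w| < 1`.  What remains is the
exponential series of `k x (1 - w)^{-1/(l-1)}`.  Absolute convergence follows in the same way,
since the rising factorials are nonnegative and the same computation at `|w|` and `|k x|` sums
the absolute values.
-/

open Finset Polynomial

lemma ascPochhammer_eval_eq_prod_range {R : Type*} [CommSemiring R] (n : ℕ) (r : R) :
    (ascPochhammer R n).eval r = ∏ i ∈ range n, (r + i) := by
  induction n with
  | zero => simp
  | succ n ih => simp [ascPochhammer_succ_right, ih, prod_range_succ]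

lemma ascPochhammer_eval_nonneg {a : ℝ} (ha : 0 ≤ a) (n : ℕ) :
    0 ≤ (ascPochhammer ℝ n).eval a := by
  rw [ascPochhammer_eval_eq_prod_range]
  exact prod_nonneg fun i _ => by positivity

lemma prod_range_add_mul_eq_pow_mul_ascPochhammer_eval {K : Type*} [Field K] (b : K) {c : K}
    (hc : c ≠ 0) (j : ℕ) :
    ∏ i ∈ range j, (b + i * c) = c ^ j * (ascPochhammer K j).eval (c⁻¹ * b) := by
  rw [ascPochhammer_eval_eq_prod_range, pow_eq_prod_const, ← prod_mul_distrib]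
  refine prod_congr rfl fun i _ => ?_
  field_simp

lemma Ring.choose_add_sub_one_eq_ascPochhammer_eval_div (a : ℝ) (n : ℕ) :
    Ring.choose (a + n - 1) n = (ascPochhammer ℝ n).eval a / n.factorial := by
  rw [Ring.choose_eq_smul, descPochhammer_smeval_eq_ascPochhammer,
    ascPochhammer_smeval_eq_eval, smul_eq_mul, inv_mul_eq_div]
  congr 3
  ring

theorem hasSum_ascPochhammer_eval_mul_pow_div_factorial (a : ℝ) {z : ℝ} (hz : |z| < 1) :
    HasSum (fun n => (ascPochhammer ℝ n).eval a * z ^ n / n.factorial) ((1 - z) ^ (-a)) := by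
  have hz' : z ∈ Metric.eball (0 : ℝ) 1 := by simpa [Metric.eball, edist_dist] using hz
  have hsum := (Real.one_div_one_sub_rpow_hasFPowerSeriesOnBall_zero a).hasSum hz'
  simp only [FormalMultilinearSeries.ofScalars_apply_eq,
    Ring.choose_add_sub_one_eq_ascPochhammer_eval_div, smul_eq_mul, zero_add] at hsum
  rw [Real.rpow_neg (by linarith [le_abs_self z]), inv_eq_one_div]
  exact hsum.congr_fun fun n => by ring

lemma abs_ascPochhammer_eval_mul_pow_div_factorial {a : ℝ} (ha : 0 ≤ a) (z : ℝ) (n : ℕ) :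
    |(ascPochhammer ℝ n).eval a * z ^ n / n.factorial| =
      (ascPochhammer ℝ n).eval a * |z| ^ n / n.factorial := by
  rw [abs_div, abs_mul, abs_pow, abs_of_nonneg (ascPochhammer_eval_nonneg ha n), Nat.abs_cast]

lemma hasSum_ascPochhammer_eval_mul_natCast_mul_pow_div_factorial (a : ℝ) {z : ℝ} (hz : |z| < 1)
    (v : ℝ) (m : ℕ) :
    HasSum (fun n => (ascPochhammer ℝ n).eval (a * m) * z ^ n / n.factorial *
        (v ^ m / m.factorial))
      ((v * (1 - z) ^ (-a)) ^ m / m.factorial) := by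
  have hz1 : 0 ≤ 1 - z := by linarith [le_abs_self z]
  rw [show (v * (1 - z) ^ (-a)) ^ m / m.factorial =
      (1 - z) ^ (-(a * m)) * (v ^ m / m.factorial) by
    rw [← neg_mul, Real.rpow_mul_natCast hz1, mul_pow]; ring]
  exact (hasSum_ascPochhammer_eval_mul_pow_div_factorial (a * m) hz).mul_right _

theorem summable_abs_and_tsum_ascPochhammer_double_series_eq_exp {a : ℝ} (ha : 0 ≤ a) {z : ℝ}
    (hz : |z| < 1) (v : ℝ) :
    Summable (fun p : ℕ × ℕ => |(ascPochhammer ℝ p.2).eval (a * p.1) * z ^ p.2 /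
      p.2.factorial * (v ^ p.1 / p.1.factorial)|) ∧
    ∑' p : ℕ × ℕ, (ascPochhammer ℝ p.2).eval (a * p.1) * z ^ p.2 / p.2.factorial *
      (v ^ p.1 / p.1.factorial) = Real.exp (v * (1 - z) ^ (-a)) := by
  have hexp (y : ℝ) : HasSum (fun m : ℕ => y ^ m / m.factorial) (Real.exp y) := by
    rw [Real.exp_eq_exp_ℝ]
    exact NormedSpace.expSeries_div_hasSum_exp y
  have hrow {w : ℝ} (hw : |w| < 1) (y : ℝ) (m : ℕ) :=
    hasSum_ascPochhammer_eval_mul_natCast_mul_pow_div_factorial a hw y m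
  have hz' : |(|z|)| < 1 := by rwa [abs_abs]
  have hsummable : Summable (fun p : ℕ × ℕ => |(ascPochhammer ℝ p.2).eval (a * p.1) *
      z ^ p.2 / p.2.factorial * (v ^ p.1 / p.1.factorial)|) := by
    simp only [abs_mul, abs_div, abs_pow, Nat.abs_cast,
      abs_ascPochhammer_eval_mul_pow_div_factorial (mul_nonneg ha (Nat.cast_nonneg _))]
    have hnonneg (p : ℕ × ℕ) : 0 ≤ (ascPochhammer ℝ p.2).eval (a * p.1) * |z| ^ p.2 /
        p.2.factorial * (|v| ^ p.1 / p.1.factorial) :=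
      mul_nonneg (div_nonneg (mul_nonneg (ascPochhammer_eval_nonneg (by positivity) _)
        (by positivity)) (by positivity)) (by positivity)
    refine (summable_prod_of_nonneg hnonneg).2 ⟨fun m => (hrow hz' |v| m).summable, ?_⟩
    simp only [fun m => (hrow hz' |v| m).tsum_eq]
    exact (hexp _).summable
  refine ⟨hsummable, ?_⟩
  rw [hsummable.of_abs.tsum_prod' fun m => (hrow hz v m).summable]
  simp only [fun m => (hrow hz v m).tsum_eq]
  exact (hexp _).tsum_eq

lemma prod_mul_pow_div_factorial_eq_ascPochhammer_eval_mul {n : ℕ} (hn : n ≠ 0) (k x : ℝ)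
    (m j : ℕ) :
    (∏ i ∈ range j, ((m : ℝ) + i * n)) * k ^ (m + j * n) * x ^ m /
        (j.factorial * m.factorial) =
      (ascPochhammer ℝ j).eval ((n : ℝ)⁻¹ * m) * (n * k ^ n) ^ j / j.factorial *
        ((k * x) ^ m / m.factorial) := by
  rw [prod_range_add_mul_eq_pow_mul_ascPochhammer_eval _ (Nat.cast_ne_zero.2 hn), pow_add,
    mul_comm j n, pow_mul, mul_pow, mul_pow]
  ring

/-- For `l ≥ 2` and real `k`, `x` with `(l-1)|k|^{l-1} < 1`, the double
series `∑_{m,j} (∏_{i=0}^{j-1} (m + i(l-1))) k^{m+j(l-1)} x^m / (j! m!)` converges absolutely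
and its sum equals `exp(kx / (1 - (l-1)k^{l-1})^{1/(l-1)})`.  This is the identity
`e^{x (d/dx)^l} e^{kx} = exp(kx (1 - (l-1)k^{l-1})^{-1/(l-1)})` written out termwise. -/
theorem statement11 (l : ℕ) (hl : 2 ≤ l) (k x : ℝ)
    (hk : ((l : ℝ) - 1) * |k| ^ (l - 1) < 1) :
    Summable (fun p : ℕ × ℕ =>
      |(∏ i ∈ Finset.range p.2, ((p.1 : ℝ) + (i : ℝ) * ((l : ℝ) - 1))) *
        k ^ (p.1 + p.2 * (l - 1)) * x ^ p.1 /
        ((p.2.factorial : ℝ) * (p.1.factorial : ℝ))|) ∧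
    ∑' p : ℕ × ℕ,
        (∏ i ∈ Finset.range p.2, ((p.1 : ℝ) + (i : ℝ) * ((l : ℝ) - 1))) *
          k ^ (p.1 + p.2 * (l - 1)) * x ^ p.1 /
          ((p.2.factorial : ℝ) * (p.1.factorial : ℝ)) =
      Real.exp (k * x / (1 - ((l : ℝ) - 1) * k ^ (l - 1)) ^ ((1 : ℝ) / ((l : ℝ) - 1))) := by
  obtain ⟨n, rfl⟩ : ∃ n, l = n + 1 := ⟨l - 1, by omega⟩
  have hn : n ≠ 0 := by omega
  simp only [Nat.add_sub_cancel, Nat.cast_add, Nat.cast_one, add_sub_cancel_right] at hk ⊢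
  have hz : |(n : ℝ) * k ^ n| < 1 := by rwa [abs_mul, abs_pow, Nat.abs_cast]
  simp only [prod_mul_pow_div_factorial_eq_ascPochhammer_eval_mul hn]
  obtain ⟨hsummable, hsum⟩ :=
    summable_abs_and_tsum_ascPochhammer_double_series_eq_exp (inv_nonneg.2 n.cast_nonneg) hz
      (k * x)
  refine ⟨hsummable, hsum.trans ?_⟩
  rw [Real.rpow_neg (by linarith [le_abs_self ((n : ℝ) * k ^ n)]), one_div, div_eq_mul_inv]
end

section
/- Let κ > 0, let k, q ∈ ℝ³ with k ≠ 0 and κ|q| ≤ 1, and define P : ℝ → ℝ³ by P(μ) = (√(1 − κ²|q|²)/(κ|k|)) · sin(κ|k|μ) · k + cos(κ|k|μ) · q − (sin(κ|k|μ)/|k|) · (k × q). Then for all real μ, 1 − κ²|P(μ)|² = ( √(1 − κ²|q|²) · cos(κ|k|μ) − (κ (k·q)/|k|) · sin(κ|k|μ) )². -/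
/-!
`k × q` is orthogonal to `k` and `q`, and Lagrange's identity gives
`|k × q|² = |k|²|q|² - (k·q)²`, so `|P(μ)|²` is a quadratic form in `sin` and `cos` of
`κ|k|μ` whose coefficients involve only `|k|`, `|q|` and `k·q`. With `S = √(1 - κ²|q|²)`,
i.e. `S² + κ²|q|² = 1`, and `sin² + cos² = 1`, the expression `1 - κ²|P(μ)|²` collapses to
the square `(S cos - κ (k·q)/|k| sin)²`.
-/

/-- The standard Euclidean inner product on `ℝ³`. -/
def dot3 (a b : Fin 3 → ℝ) : ℝ := ∑ i, a i * b i

/-- The Euclidean norm on `ℝ³`. -/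
noncomputable def norm3 (a : Fin 3 → ℝ) : ℝ := Real.sqrt (dot3 a a)

/-- The cross product on `ℝ³`. -/
def cross3 (a b : Fin 3 → ℝ) : Fin 3 → ℝ :=
  ![a 1 * b 2 - a 2 * b 1, a 2 * b 0 - a 0 * b 2, a 0 * b 1 - a 1 * b 0]

open Matrix

lemma dot3_eq_dotProduct (a b : Fin 3 → ℝ) : dot3 a b = a ⬝ᵥ b := rfl

lemma cross3_eq_crossProduct (a b : Fin 3 → ℝ) : cross3 a b = a ⨯₃ b := rfl

lemma dot3_self_nonneg (a : Fin 3 → ℝ) : 0 ≤ dot3 a a :=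
  Finset.sum_nonneg fun i _ => mul_self_nonneg (a i)

lemma norm3_sq (a : Fin 3 → ℝ) : norm3 a ^ 2 = dot3 a a :=
  Real.sq_sqrt (dot3_self_nonneg a)

lemma norm3_ne_zero {a : Fin 3 → ℝ} (ha : a ≠ 0) : norm3 a ≠ 0 := by
  rw [← pow_ne_zero_iff two_ne_zero, norm3_sq, dot3_eq_dotProduct]
  exact dotProduct_self_eq_zero.not.mpr ha

lemma dotProduct_self_smul_add_smul_sub_smul_cross {R : Type*} [CommRing R]
    (a c d : R) (k q : Fin 3 → R) :
    (a • k + c • q - d • k ⨯₃ q) ⬝ᵥ (a • k + c • q - d • k ⨯₃ q) =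
      a ^ 2 * (k ⬝ᵥ k) + c ^ 2 * (q ⬝ᵥ q) + d ^ 2 * ((k ⬝ᵥ k) * (q ⬝ᵥ q) - (k ⬝ᵥ q) ^ 2) +
        2 * a * c * (k ⬝ᵥ q) := by
  have hqk : q ⬝ᵥ k = k ⬝ᵥ q := dotProduct_comm q k
  have hlagrange : k ⨯₃ q ⬝ᵥ k ⨯₃ q = (k ⬝ᵥ k) * (q ⬝ᵥ q) - (k ⬝ᵥ q) ^ 2 := by
    rw [cross_dot_cross, hqk]; ring
  have hkc : k ⨯₃ q ⬝ᵥ k = 0 := by rw [dotProduct_comm, dot_self_cross]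
  have hqc : k ⨯₃ q ⬝ᵥ q = 0 := by rw [dotProduct_comm, dot_cross_self]
  simp only [add_dotProduct, sub_dotProduct, dotProduct_add, dotProduct_sub, smul_dotProduct,
    dotProduct_smul, smul_eq_mul, dot_self_cross, dot_cross_self, hkc, hqc, hlagrange, hqk]
  ring

/-- Let `κ > 0`, `k, q ∈ ℝ³` with `k ≠ 0` and `κ|q| ≤ 1`, and define
`P(μ) = (√(1 - κ²|q|²)/(κ|k|)) sin(κ|k|μ) k + cos(κ|k|μ) q - (sin(κ|k|μ)/|k|) (k × q)`.
Then for all real `μ`,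
`1 - κ²|P(μ)|² = (√(1 - κ²|q|²) cos(κ|k|μ) - (κ(k·q)/|k|) sin(κ|k|μ))²`. -/
theorem statement14 (κ : ℝ) (hκ : 0 < κ) (k q : Fin 3 → ℝ) (hk : k ≠ 0)
    (hq : κ * norm3 q ≤ 1)
    (P : ℝ → Fin 3 → ℝ)
    (hP : ∀ μ : ℝ, P μ =
      (Real.sqrt (1 - κ ^ 2 * dot3 q q) / (κ * norm3 k) *
        Real.sin (κ * norm3 k * μ)) • k +
      Real.cos (κ * norm3 k * μ) • q -
      (Real.sin (κ * norm3 k * μ) / norm3 k) • cross3 k q)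
    (μ : ℝ) :
    1 - κ ^ 2 * dot3 (P μ) (P μ) =
      (Real.sqrt (1 - κ ^ 2 * dot3 q q) * Real.cos (κ * norm3 k * μ) -
        κ * dot3 k q / norm3 k * Real.sin (κ * norm3 k * μ)) ^ 2 := by
  have hS : Real.sqrt (1 - κ ^ 2 * dot3 q q) ^ 2 = 1 - κ ^ 2 * dot3 q q := by
    have hκq : (κ * norm3 q) ^ 2 ≤ 1 := pow_le_one₀ (mul_nonneg hκ.le (Real.sqrt_nonneg _)) hq
    rw [mul_pow, norm3_sq] at hκq
    exact Real.sq_sqrt (sub_nonneg.mpr hκq)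
  have hk' : norm3 k ≠ 0 := norm3_ne_zero hk
  rw [hP, cross3_eq_crossProduct, dot3_eq_dotProduct, dotProduct_self_smul_add_smul_sub_smul_cross]
  simp only [← dot3_eq_dotProduct, ← norm3_sq k]
  field_simp
  linear_combination (-(norm3 k ^ 2)) * ((Real.sqrt (1 - κ ^ 2 * dot3 q q) ^ 2 + κ ^ 2 * dot3 q q)
    * Real.sin_sq_add_cos_sq (κ * norm3 k * μ) + hS)
end
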